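/- In the one-dimensional abstraction of the marching algorithm, if the head position (maximum occupied coordinate) is occupied by 2 robots, then a legal move exists that increases the maximum occupied coordinate by 1; and if every occupied coordinate is occupied by exactly 1 robot, then a legal move exists at the minimum occupied coordinate. Hence from any valid configuration some legal move exists (the system never deadlocks). -/
import Mathlib

private lemma marching_aux (f : ℤ → ℕ) (a b : ℤ)
    (hin : ∀ y, a ≤ y → y ≤ b → f y = 1 ∨ f y = 2)
    (hb : f b = 1) :
    ∀ n : ℕ, ∀ c : ℤ, a ≤ c → c ≤ b → (b - c).toNat = n → f c = 2 →
      ∃ x, a ≤ x ∧ x < b ∧ f x = 2 ∧ f (x + 1) = 1 := by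
  intro n
  induction n with
  | zero =>
    intro c hac hcb h0 hc2
    have : b = c := by omega
    rw [this] at hb
    omega
  | succ k ih =>
    intro c hac hcb hk hc2
    have hcb' : c < b := by omega
    have h1 : a ≤ c + 1 := by omega
    have h2 : c + 1 ≤ b := by omega
    rcases hin (c + 1) h1 h2 with h | h
    · exact ⟨c, hac, hcb', hc2, h⟩
    · exact ih (c + 1) h1 h2 (by omega) h

theorem marching_no_deadlock (f : ℤ → ℕ) (a b : ℤ)
    (hab : a ≤ b)
    (hin : ∀ y, a ≤ y → y ≤ b → f y = 1 ∨ f y = 2)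
    (hout : ∀ y, y < a ∨ b < y → f y = 0) :
    f b = 2 ∨ (∃ x, a ≤ x ∧ x < b ∧ f x = 2 ∧ f (x + 1) = 1) ∨
      (f a = 1 ∧ f (a + 1) ≤ 1) := by
  rcases hin b hab le_rfl with hb | hb
  · -- f b = 1
    rcases hin a le_rfl hab with ha | ha
    · -- f a = 1
      by_cases hab1 : a + 1 ≤ b
      · rcases hin (a + 1) (by omega) hab1 with h1 | h1
        · exact Or.inr (Or.inr ⟨ha, by omega⟩)
        · exact Or.inr (Or.inl (marching_aux f a b hin hb ((b - (a+1)).toNat)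
            (a + 1) (by omega) hab1 rfl h1))
      · have : f (a + 1) = 0 := hout (a + 1) (Or.inr (by omega))
        exact Or.inr (Or.inr ⟨ha, by omega⟩)
    · -- f a = 2
      exact Or.inr (Or.inl (marching_aux f a b hin hb ((b - a).toNat)
        a le_rfl hab rfl ha))
  · exact Or.inl hb
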